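/- Let g = (g_1, …, g_s) ⊂ ℚ[z_1, …, z_k] be invariant under S_{t_1} × ⋯ × S_{t_k} and satisfy condition (A), i.e. the Jacobian matrix of g has rank s at every point of V(g) ⊂ ℂ^ℓ where ℓ = t_1 + ⋯ + t_k. For each i let ζ_{g_i} ∈ ℚ[e_{1,1}, …, e_{t_k,k}] be the unique polynomial with g_i = ζ_{g_i}(E_{1,1}, …, E_{t_k,k}), where E_{j,i} is the j-th elementary symmetric polynomial in the block z_i. Then the sequence (ζ_{g_1}, …, ζ_{g_s}) also satisfies condition (A): its Jacobian matrix with respect to the ℓ variables e_{j,i} has rank s at every point of V(ζ_{g_1}, …, ζ_{g_s}) ⊂ ℂ^ℓ. -/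

import Mathlib

/-!
Write `E_{j,i}` for the elementary symmetric polynomials of the blocks, so that `g = ζ ∘ E`.
Over `ℂ` every point `w` is a value of `E`: the entries `w_{1,i}, …, w_{t_i,i}` are, up to
sign, the coefficients of a monic polynomial, and its roots `z_i` satisfy `E(z) = w`. If
`ζ(w) = 0` then `g(z) = 0`, and the chain rule factors `Jg(z) = Jζ(w) · JE(z)`, so
`s = rank Jg(z) ≤ rank Jζ(w) ≤ s`.
-/

open MvPolynomial

namespace Multiset

open Polynomial in
theorem exists_card_eq_and_esymm_eq {K : Type*} [Field K] [IsAlgClosed K] (n : ℕ)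
    (c : Fin n → K) :
    ∃ s : Multiset K, card s = n ∧ ∀ j : Fin n, s.esymm (j + 1) = c j := by
  classical
  set q : K[X] := Polynomial.X ^ n + ofFn n fun i => (-1) ^ ((i.rev : ℕ) + 1) * c i.rev with hq
  have hmonic : q.Monic := monic_X_pow_add (ofFn_degree_lt _)
  have hdeg : q.natDegree = n := by
    rw [natDegree_add_eq_left_of_degree_lt] <;> simp [ofFn_degree_lt]
  have hroots : card q.roots = q.natDegree := splits_iff_card_roots.mp (IsAlgClosed.splits q)
  refine ⟨q.roots, hroots.trans hdeg, fun j => ?_⟩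
  have hcoeff : q.coeff j.rev = (-1) ^ ((j : ℕ) + 1) * c j := by
    rw [hq, Polynomial.coeff_add, Polynomial.coeff_X_pow, if_neg j.rev.isLt.ne, zero_add,
      ofFn_coeff_eq_val_of_lt _ j.rev.isLt, Fin.eta, Fin.rev_rev]
  have hvieta := coeff_eq_esymm_roots_of_card hroots (k := j.rev) (by omega)
  rw [hcoeff, hmonic.leadingCoeff, hdeg, show n - j.rev = j + 1 by rw [Fin.val_rev]; omega,
    one_mul] at hvieta
  exact (mul_left_cancel₀ (by simp) hvieta).symm

theorem exists_fin_map_eq {α : Type*} {n : ℕ} (s : Multiset α) (hs : card s = n) :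
    ∃ z : Fin n → α, Finset.univ.val.map z = s := by
  obtain ⟨l, rfl⟩ : ∃ l : List α, ↑l = s := ⟨_, s.coe_toList⟩
  rw [coe_card] at hs
  subst hs
  exact ⟨l.get, by rw [Fin.univ_val_map, List.ofFn_get]⟩

end Multiset

namespace MvPolynomial

theorem pderiv_aeval {R σ τ : Type*} [CommSemiring R] [Fintype τ]
    (E : τ → MvPolynomial σ R) (p : MvPolynomial τ R) (v : σ) :
    pderiv v (aeval E p) = ∑ u, aeval E (pderiv u p) * pderiv v (E u) := by
  classical
  induction p using MvPolynomial.induction_on with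
  | C a => simp
  | add p q hp hq => simp only [map_add, hp, hq, add_mul, Finset.sum_add_distrib]
  | mul_X p i hp =>
    simp only [map_mul, aeval_X, Derivation.leibniz, hp, smul_eq_mul, pderiv_X, map_add,
      add_mul, Finset.sum_add_distrib, Finset.mul_sum, Pi.single_apply, mul_ite, mul_one, mul_zero,
      apply_ite (aeval E), map_zero, ite_mul, zero_mul, Finset.sum_ite_eq, Finset.mem_univ,
      if_true, mul_assoc]

noncomputable def jacobianAt {R S ι σ : Type*} [CommSemiring R] [CommSemiring S] [Algebra R S]
    (f : ι → MvPolynomial σ R) (x : σ → S) : Matrix ι σ S :=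
  Matrix.of fun a v => aeval x (pderiv v (f a))

theorem jacobianAt_aeval {R S ι σ τ : Type*} [CommSemiring R] [CommSemiring S] [Algebra R S]
    [Fintype τ] (f : ι → MvPolynomial τ R) (E : τ → MvPolynomial σ R) (x : σ → S) :
    jacobianAt (fun a => aeval E (f a)) x =
      jacobianAt f (fun u => aeval x (E u)) * jacobianAt E x := by
  ext a v
  simp only [jacobianAt, Matrix.of_apply, Matrix.mul_apply, pderiv_aeval, map_sum, map_mul]
  simp only [aeval_eq_bind₁, aeval_bind₁]

theorem exists_aeval_esymm_eq {R K : Type*} [CommSemiring R] [Field K] [IsAlgClosed K]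
    [Algebra R K] (n : ℕ) (c : Fin n → K) :
    ∃ z : Fin n → K, ∀ j : Fin n, aeval z (esymm (Fin n) R (j + 1)) = c j := by
  obtain ⟨s, hs, hesymm⟩ := Multiset.exists_card_eq_and_esymm_eq n c
  obtain ⟨z, rfl⟩ := s.exists_fin_map_eq hs
  exact ⟨z, fun j => by rw [aeval_esymm_eq_multiset_esymm, hesymm]⟩

/-- The index `⟨i, j⟩` stands for `E_{j+1,i}`, of degree `j + 1`. -/
noncomputable def blockEsymm {ι : Type*} (R : Type*) [CommSemiring R] (t : ι → ℕ)
    (p : (i : ι) × Fin (t i)) : MvPolynomial ((i : ι) × Fin (t i)) R :=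
  rename (Sigma.mk p.1) (esymm (Fin (t p.1)) R ((p.2 : ℕ) + 1))

theorem exists_aeval_blockEsymm_eq {ι : Type*} (R : Type*) {K : Type*} [CommSemiring R] [Field K]
    [IsAlgClosed K] [Algebra R K] (t : ι → ℕ) (w : (i : ι) × Fin (t i) → K) :
    ∃ z : (i : ι) × Fin (t i) → K, ∀ p, aeval z (blockEsymm R t p) = w p := by
  choose z hz using fun i => exists_aeval_esymm_eq (R := R) (t i) fun j => w ⟨i, j⟩
  exact ⟨fun p => z p.1 p.2, fun p => by rw [blockEsymm, aeval_rename]; exact hz p.1 p.2⟩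

end MvPolynomial

theorem elementary_representation_preserves_conditionA_general
    (k s : ℕ) (t : Fin k → ℕ)
    (g ζ : Fin s → MvPolynomial ((i : Fin k) × Fin (t i)) ℚ)
    (hrep : ∀ a, aeval (fun p : (i : Fin k) × Fin (t i) =>
        rename (fun j : Fin (t p.1) => (⟨p.1, j⟩ : (i : Fin k) × Fin (t i)))
          (esymm (Fin (t p.1)) ℚ ((p.2 : ℕ) + 1))) (ζ a) = g a)
    (hA : ∀ w : ((i : Fin k) × Fin (t i)) → ℂ, (∀ a, aeval w (g a) = 0) →
      (Matrix.of fun (a : Fin s) (v : (i : Fin k) × Fin (t i)) =>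
        aeval w (pderiv v (g a))).rank = s) :
    ∀ w : ((i : Fin k) × Fin (t i)) → ℂ, (∀ a, aeval w (ζ a) = 0) →
      (Matrix.of fun (a : Fin s) (v : (i : Fin k) × Fin (t i)) =>
        aeval w (pderiv v (ζ a))).rank = s := by
  intro w hw
  have hg : g = fun a => aeval (blockEsymm ℚ t) (ζ a) := funext fun a => (hrep a).symm
  obtain ⟨z, hz⟩ := exists_aeval_blockEsymm_eq ℚ t w
  have hgz : ∀ a, aeval z (g a) = 0 := fun a => by
    rw [hg, aeval_eq_bind₁, aeval_bind₁, funext hz, hw a]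
  have hfactor : jacobianAt g z = jacobianAt ζ w * jacobianAt (blockEsymm ℚ t) z := by
    rw [hg, jacobianAt_aeval, funext hz]
  change (jacobianAt ζ w).rank = s
  refine le_antisymm ((Matrix.rank_le_card_height _).trans_eq (Fintype.card_fin s)) ?_
  calc s = (jacobianAt g z).rank := (hA z hgz).symm
    _ ≤ (jacobianAt ζ w).rank := hfactor ▸ Matrix.rank_mul_le_left _ _

/-- if the `S_{t_1} × ⋯ × S_{t_k}`-invariant system `g = (g_1,…,g_s)`
satisfies condition (A) (Jacobian of rank `s` at every complex zero), and `ζ_{g_i}` are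
the unique polynomials with `g_i = ζ_{g_i}(E_{1,1},…,E_{t_k,k})` (elementary symmetric
polynomials of the blocks), then `(ζ_{g_1},…,ζ_{g_s})` also satisfies condition (A). -/
theorem elementary_representation_preserves_conditionA
    (k s : ℕ) (t : Fin k → ℕ) (ht : ∀ i, 0 < t i)
    (g ζ : Fin s → MvPolynomial ((i : Fin k) × Fin (t i)) ℚ)
    (hinv : ∀ a, ∀ σ : (i : Fin k) → Equiv.Perm (Fin (t i)),
      rename (fun p : (i : Fin k) × Fin (t i) =>
        (⟨p.1, σ p.1 p.2⟩ : (i : Fin k) × Fin (t i))) (g a) = g a)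
    (hrep : ∀ a, aeval (fun p : (i : Fin k) × Fin (t i) =>
        rename (fun j : Fin (t p.1) => (⟨p.1, j⟩ : (i : Fin k) × Fin (t i)))
          (esymm (Fin (t p.1)) ℚ ((p.2 : ℕ) + 1))) (ζ a) = g a)
    (hA : ∀ w : ((i : Fin k) × Fin (t i)) → ℂ, (∀ a, aeval w (g a) = 0) →
      (Matrix.of fun (a : Fin s) (v : (i : Fin k) × Fin (t i)) =>
        aeval w (pderiv v (g a))).rank = s) :
    ∀ w : ((i : Fin k) × Fin (t i)) → ℂ, (∀ a, aeval w (ζ a) = 0) →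
      (Matrix.of fun (a : Fin s) (v : (i : Fin k) × Fin (t i)) =>
        aeval w (pderiv v (ζ a))).rank = s :=
  elementary_representation_preserves_conditionA_general k s t g ζ hrep hA
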